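/- Let p be a prime with p ≡ 1 (mod 4). Assume the Weil-type bound: for every nonempty S ⊆ F_p, |∑_{i ∈ F_p} χ(∏_{j ∈ S}(i − j))| ≤ (|S| − 1)√p + 1, where χ is the Legendre character. Then for every nonempty subset S of vertices of the Paley graph Pal_p, |S ∪ Odd(S)| ≥ √p − 1/2 and |S ∪ Even(S)| ≥ √p − 1/2. -/

import Mathlib

/-- Odd neighborhood. -/
def oddNbhd {V : Type*} (G : SimpleGraph V) (S : Set V) : Set V :=
  {v | Odd ((G.neighborSet v ∩ S).ncard)}

/-- Even neighborhood. -/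
def evenNbhd {V : Type*} (G : SimpleGraph V) (S : Set V) : Set V :=
  {v | Even ((G.neighborSet v ∩ S).ncard)}

/-- The Paley graph on `ZMod p`. -/
def paley (p : ℕ) [Fact p.Prime] : SimpleGraph (ZMod p) where
  Adj i j := i ≠ j ∧ IsSquare (i - j) ∧ IsSquare (j - i)
  symm := ⟨fun _ _ ⟨h, a, b⟩ => ⟨h.symm, b, a⟩⟩
  loopless := ⟨fun _ ⟨h, _⟩ => h rfl⟩

/-! For `i ∉ S` every factor `χ(i - j)`, `j ∈ S`, is `1` or `-1` according as `i` and `j` are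
adjacent (this is where `p ≡ 1 mod 4` enters: `-1` is a square, so adjacency is just "`i - j` is a
nonzero square"). Hence `χ(∏_{j ∈ S} (i - j)) = (-1)^|S| (-1)^|N(i) ∩ S|`, and the Weil sum equals
`±(|S ∪ Even(S)| - |S ∪ Odd(S)|)`. As `Odd(S)` and `Even(S)` partition the vertices, the two sizes
add up to `p + |S|`, so each lies within `((|S| - 1)√p + 1) / 2` of `(p + |S|) / 2`; together with
the trivial bound `|S|` this forces each to be at least `√p - 1/2`. -/

open Finset

namespace Set

variable {α : Type*}

theorem ncard_union_add_ncard_union_compl [Finite α] (s t : Set α) :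
    (s ∪ t).ncard + (s ∪ tᶜ).ncard = Nat.card α + s.ncard := by
  rw [← ncard_union_add_ncard_inter, ← union_union_distrib_left, ← union_inter_distrib_left,
    union_compl_self, inter_compl_self, union_univ, union_empty, ncard_univ]

variable [Fintype α] [DecidableEq α]

theorem ncard_coe_union_eq_card_add_card_filter (s : Finset α) (t : Set α)
    [DecidablePred (· ∈ t)] : ((s : Set α) ∪ t).ncard = #s + #{i ∈ sᶜ | i ∈ t} := by
  have hdisj : Disjoint s {i ∈ sᶜ | i ∈ t} :=
    Finset.disjoint_of_subset_right (filter_subset _ _) disjoint_compl_right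
  rw [← card_union_of_disjoint hdisj, ← ncard_coe_finset]
  congr 1
  ext i
  by_cases hi : i ∈ s <;> simp [hi]

theorem sum_compl_ite_mem_eq_ncard_sub_ncard (s : Finset α) (t : Set α)
    [DecidablePred (· ∈ t)] :
    ∑ i ∈ sᶜ, (if i ∈ t then (-1 : ℤ) else 1) =
      ((s : Set α) ∪ tᶜ).ncard - ((s : Set α) ∪ t).ncard := by
  rw [sum_ite, sum_const, sum_const, ncard_coe_union_eq_card_add_card_filter,
    ncard_coe_union_eq_card_add_card_filter]
  simp only [mem_compl_iff, smul_neg, nsmul_eq_mul, mul_one]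
  push_cast
  ring

end Set

theorem Finset.prod_ite_one_neg_one {ι R : Type*} [CommMonoid R] [HasDistribNeg R]
    (s : Finset ι) (p : ι → Prop) [DecidablePred p] :
    ∏ i ∈ s, (if p i then (1 : R) else -1) = (-1) ^ #s * (-1) ^ #{i ∈ s | p i} := by
  calc ∏ i ∈ s, (if p i then (1 : R) else -1) = ∏ i ∈ s, -1 * (if p i then -1 else 1) :=
        prod_congr rfl fun i _ => by split_ifs <;> simp
    _ = _ := by rw [prod_mul_distrib, prod_const, prod_ite, prod_const, prod_const_one, mul_one]

namespace SimpleGraph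

variable {V : Type*} (G : SimpleGraph V)

theorem evenNbhd_eq_compl_oddNbhd (S : Set V) : evenNbhd G S = (oddNbhd G S)ᶜ := by
  ext v
  simp [evenNbhd, oddNbhd, Nat.not_odd_iff_even]

theorem ncard_neighborSet_inter_coe [DecidableRel G.Adj] (v : V) (S : Finset V) :
    (G.neighborSet v ∩ S).ncard = #{j ∈ S | G.Adj v j} := by
  rw [← Set.ncard_coe_finset, coe_filter]
  congr 1
  ext j
  simp [and_comm]

theorem ncard_union_oddNbhd_add_ncard_union_evenNbhd [Fintype V] (S : Set V) :
    (S ∪ oddNbhd G S).ncard + (S ∪ evenNbhd G S).ncard = Fintype.card V + S.ncard := by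
  rw [evenNbhd_eq_compl_oddNbhd, Set.ncard_union_add_ncard_union_compl, Nat.card_eq_fintype_card]

theorem sum_neg_one_pow_ncard_neighborSet_inter [Fintype V] [DecidableEq V] (S : Finset V) :
    ∑ v ∈ Sᶜ, (-1 : ℤ) ^ (G.neighborSet v ∩ S).ncard =
      ((S : Set V) ∪ evenNbhd G S).ncard - ((S : Set V) ∪ oddNbhd G S).ncard := by
  classical
  rw [evenNbhd_eq_compl_oddNbhd, ← Set.sum_compl_ite_mem_eq_ncard_sub_ncard]
  refine sum_congr rfl fun v _ => ?_
  by_cases hv : v ∈ oddNbhd G S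
  · rw [if_pos hv, Odd.neg_one_pow hv]
  · rw [if_neg hv, Even.neg_one_pow (Nat.not_odd_iff_even.mp hv)]

end SimpleGraph

section FiniteField

variable {F : Type*} [Field F] [Fintype F] [DecidableEq F]

theorem quadraticChar_eq_ite_isSquare {a : F} (ha : a ≠ 0) :
    quadraticChar F a = if IsSquare a then 1 else -1 := by
  simp [quadraticChar_apply, quadraticCharFun, ha]

variable {G : SimpleGraph F} (hG : ∀ i j, G.Adj i j ↔ i ≠ j ∧ IsSquare (i - j))
include hG

theorem quadraticChar_prod_sub_of_notMem {S : Finset F} {i : F} (hi : i ∉ S) :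
    quadraticChar F (∏ j ∈ S, (i - j)) = (-1) ^ #S * (-1) ^ (G.neighborSet i ∩ S).ncard := by
  classical
  have hchar : ∀ j ∈ S, quadraticChar F (i - j) = if G.Adj i j then 1 else -1 := fun j hj => by
    have hne : i ≠ j := fun h => hi (h ▸ hj)
    simp only [quadraticChar_eq_ite_isSquare (sub_ne_zero.mpr hne), hG, hne, ne_eq,
      not_false_eq_true, true_and]
  rw [map_prod, prod_congr rfl hchar, prod_ite_one_neg_one, G.ncard_neighborSet_inter_coe]

theorem sum_quadraticChar_prod_sub (S : Finset F) :
    ∑ i, quadraticChar F (∏ j ∈ S, (i - j)) =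
      (-1) ^ #S * (((S : Set F) ∪ evenNbhd G S).ncard - ((S : Set F) ∪ oddNbhd G S).ncard) := by
  rw [← sum_add_sum_compl S, sum_eq_zero fun i hi => ?_, zero_add,
    sum_congr rfl fun i hi => quadraticChar_prod_sub_of_notMem hG (mem_compl.mp hi), ← mul_sum,
    G.sum_neg_one_pow_ncard_neighborSet_inter]
  rw [prod_eq_zero hi (sub_self i), quadraticChar_zero]

end FiniteField

theorem paley_adj_iff {p : ℕ} [Fact p.Prime] (hp : p % 4 = 1) {i j : ZMod p} :
    (paley p).Adj i j ↔ i ≠ j ∧ IsSquare (i - j) := by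
  have hneg : IsSquare (-1 : ZMod p) := ZMod.exists_sq_eq_neg_one_iff.mpr (by omega)
  refine ⟨fun ⟨hne, hsq, _⟩ => ⟨hne, hsq⟩, fun ⟨hne, hsq⟩ => ⟨hne, hsq, ?_⟩⟩
  rw [← neg_sub, neg_eq_neg_one_mul]
  exact hneg.mul hsq

theorem sub_half_le_of_abs_sq_add_sub_two_mul_le {q s x : ℝ}
    (h : |q ^ 2 + s - 2 * x| ≤ (s - 1) * q + 1) (hs : 1 ≤ s) (hsx : s ≤ x) : q - 1 / 2 ≤ x := by
  rcases abs_le.mp h with ⟨h₁, h₂⟩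
  rcases le_or_gt 1 q with hq | hq
  · rcases le_or_gt (q ^ 2 + s) (2 * x) with hx | hx
    · nlinarith
    · nlinarith
  · linarith

theorem paley_odd_even_lower_bound (p : ℕ) [Fact p.Prime] (hp4 : p % 4 = 1)
    (hWeil : ∀ S : Finset (ZMod p), S.Nonempty →
      (|∑ i : ZMod p, quadraticChar (ZMod p) (∏ j ∈ S, (i - j))| : ℝ) ≤
        ((S.card : ℝ) - 1) * Real.sqrt p + 1) :
    ∀ S : Finset (ZMod p), S.Nonempty →
      Real.sqrt p - 1/2 ≤ (((↑S : Set (ZMod p)) ∪ oddNbhd (paley p) ↑S).ncard : ℝ) ∧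
      Real.sqrt p - 1/2 ≤ (((↑S : Set (ZMod p)) ∪ evenNbhd (paley p) ↑S).ncard : ℝ) := by
  intro S hS
  have hsum := (paley p).ncard_union_oddNbhd_add_ncard_union_evenNbhd ↑S
  have hdiff := hWeil S hS
  rw [← Int.cast_sum, sum_quadraticChar_prod_sub fun _ _ => paley_adj_iff hp4, ← Int.cast_abs,
    abs_mul, abs_pow, abs_neg, abs_one, one_pow, one_mul] at hdiff
  have hSx := Set.ncard_le_ncard (Set.subset_union_left (s := ↑S) (t := oddNbhd (paley p) ↑S))
  have hSy := Set.ncard_le_ncard (Set.subset_union_left (s := ↑S) (t := evenNbhd (paley p) ↑S))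
  rw [ZMod.card] at hsum
  rw [Set.ncard_coe_finset] at hsum hSx hSy
  generalize (↑S ∪ oddNbhd (paley p) ↑S).ncard = x at *
  generalize (↑S ∪ evenNbhd (paley p) ↑S).ncard = y at *
  have hsqrt : √p ^ 2 = p := Real.sq_sqrt p.cast_nonneg
  have hS1 : (1 : ℝ) ≤ #S := by exact_mod_cast hS.card_pos
  have hsum' : (x + y : ℝ) = p + #S := by exact_mod_cast hsum
  push_cast at hdiff
  constructor
  · refine sub_half_le_of_abs_sq_add_sub_two_mul_le ?_ hS1 (by exact_mod_cast hSx)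
    rwa [hsqrt, show (p : ℝ) + #S - 2 * x = y - x by linarith]
  · refine sub_half_le_of_abs_sq_add_sub_two_mul_le ?_ hS1 (by exact_mod_cast hSy)
    rwa [hsqrt, show (p : ℝ) + #S - 2 * y = -(y - x) by linarith, abs_neg]
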